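/- Define the grammic congruence on words over {1,...,n} by u ≡ v if and only if for all 1 ≤ p ≤ q ≤ n, the maximum length of a weakly increasing subsequence of u with entries in [p,q] equals that of v. Then ≡ is a two-sided congruence on the free monoid over {1,...,n}: it is an equivalence relation and u ≡ v, u' ≡ v' imply uu' ≡ vv'. -/

import Mathlib

/-- The maximum length of a weakly increasing subsequence of `w` all of whose
letters lie in the interval `[p, q]`. -/
def wis (w : List ℕ) (p q : ℕ) : ℕ :=
  ((w.sublists.filter (fun s => decide (s.Pairwise (· ≤ ·) ∧ ∀ a ∈ s, p ≤ a ∧ a ≤ q))).map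
    List.length).foldr max 0

/-- The grammic congruence on words over the alphabet {1, ..., n}. -/
def grameq (n : ℕ) (u v : List ℕ) : Prop :=
  ∀ p q : ℕ, 1 ≤ p → p ≤ q → q ≤ n → wis u p q = wis v p q

/-!
The statistics `wis · p q` of a product are determined by those of its factors through the
tropical product formula `wis (u ++ v) p q = max_{p ≤ r ≤ q} (wis u p r + wis v r q)`: an
increasing subsequence of `u ++ v` with letters in `[p, q]` splits into one of `u` with letters
in `[p, r]` and one of `v` with letters in `[r, q]`, where `r` is the first letter taken from `v`;
conversely two such subsequences concatenate. Hence equal statistics of the factors give equal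
statistics of the products.
-/

def IsWeaklyIncreasingIn (p q : ℕ) (s : List ℕ) : Prop :=
  s.Pairwise (· ≤ ·) ∧ ∀ a ∈ s, p ≤ a ∧ a ≤ q

namespace IsWeaklyIncreasingIn

variable {p q r : ℕ} {s t : List ℕ}

theorem append (hpr : p ≤ r) (hrq : r ≤ q) (hs : IsWeaklyIncreasingIn p r s)
    (ht : IsWeaklyIncreasingIn r q t) : IsWeaklyIncreasingIn p q (s ++ t) := by
  refine ⟨List.pairwise_append.2 ⟨hs.1, ht.1, fun a ha b hb => (hs.2 a ha).2.trans (ht.2 b hb).1⟩,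
    fun a ha => ?_⟩
  rcases List.mem_append.1 ha with ha | ha
  · exact ⟨(hs.2 a ha).1, (hs.2 a ha).2.trans hrq⟩
  · exact ⟨hpr.trans (ht.2 a ha).1, (ht.2 a ha).2⟩

theorem exists_split (hpq : p ≤ q) (h : IsWeaklyIncreasingIn p q (s ++ t)) :
    ∃ r, p ≤ r ∧ r ≤ q ∧ IsWeaklyIncreasingIn p r s ∧ IsWeaklyIncreasingIn r q t := by
  obtain ⟨hs, ht, hst⟩ := List.pairwise_append.1 h.1
  cases t with
  | nil => exact ⟨q, hpq, le_rfl, by simpa using h, List.Pairwise.nil, by simp⟩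
  | cons b t =>
    have hb := h.2 b (by simp)
    refine ⟨b, hb.1, hb.2, ⟨hs, fun a ha => ⟨(h.2 a (by simp [ha])).1, hst a ha b (by simp)⟩⟩,
      ⟨ht, fun a ha => ⟨?_, (h.2 a (by simp [ha])).2⟩⟩⟩
    rcases List.mem_cons.1 ha with rfl | ha
    · exact le_rfl
    · exact List.rel_of_pairwise_cons ht ha

end IsWeaklyIncreasingIn

section wis

variable {w s : List ℕ} {p q : ℕ}

theorem le_wis (hs : s.Sublist w) (h : IsWeaklyIncreasingIn p q s) : s.length ≤ wis w p q :=
  List.le_max_of_le' 0 (List.mem_map_of_mem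
    (List.mem_filter.2 ⟨List.mem_sublists.2 hs, decide_eq_true h⟩)) le_rfl

theorem wis_le_iff {m : ℕ} : wis w p q ≤ m ↔
    ∀ s, s.Sublist w → IsWeaklyIncreasingIn p q s → s.length ≤ m := by
  refine ⟨fun hm s hs h => (le_wis hs h).trans hm, fun hm => List.max_le_of_forall_le _ _ ?_⟩
  simp only [List.mem_map, List.mem_filter, List.mem_sublists, decide_eq_true_eq]
  rintro _ ⟨s, ⟨hs, h⟩, rfl⟩
  exact hm s hs h

theorem exists_length_eq_wis (w : List ℕ) (p q : ℕ) :
    ∃ s, s.Sublist w ∧ IsWeaklyIncreasingIn p q s ∧ s.length = wis w p q := by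
  set L := (w.sublists.filter (fun s => decide (s.Pairwise (· ≤ ·) ∧ ∀ a ∈ s, p ≤ a ∧ a ≤ q))).map
    List.length
  have hL : L ≠ [] := List.ne_nil_of_mem (List.mem_map_of_mem (List.mem_filter.2
    ⟨List.mem_sublists.2 (List.nil_sublist w), decide_eq_true ⟨List.Pairwise.nil, by simp⟩⟩))
  have hmem : wis w p q ∈ L := List.maximum_mem (List.foldr_max_of_ne_nil hL).symm
  simp only [L, List.mem_map, List.mem_filter, List.mem_sublists, decide_eq_true_eq] at hmem
  obtain ⟨s, ⟨hs, h⟩, hlen⟩ := hmem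
  exact ⟨s, hs, h, hlen⟩

theorem wis_append {u v : List ℕ} (hpq : p ≤ q) :
    wis (u ++ v) p q = (Finset.Icc p q).sup fun r => wis u p r + wis v r q := by
  refine le_antisymm (wis_le_iff.2 fun s hs h => ?_) (Finset.sup_le fun r hr => ?_)
  · obtain ⟨s₁, s₂, rfl, hs₁, hs₂⟩ := List.sublist_append_iff.1 hs
    obtain ⟨r, hpr, hrq, h₁, h₂⟩ := h.exists_split hpq
    calc (s₁ ++ s₂).length = s₁.length + s₂.length := List.length_append
      _ ≤ wis u p r + wis v r q := add_le_add (le_wis hs₁ h₁) (le_wis hs₂ h₂)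
      _ ≤ _ := Finset.le_sup (f := fun r => wis u p r + wis v r q) (Finset.mem_Icc.2 ⟨hpr, hrq⟩)
  · obtain ⟨hpr, hrq⟩ := Finset.mem_Icc.1 hr
    obtain ⟨s₁, hs₁, h₁, hlen₁⟩ := exists_length_eq_wis u p r
    obtain ⟨s₂, hs₂, h₂, hlen₂⟩ := exists_length_eq_wis v r q
    rw [← hlen₁, ← hlen₂, ← List.length_append]
    exact le_wis (hs₁.append hs₂) (h₁.append hpr hrq h₂)

end wis

theorem grameq_equivalence (n : ℕ) : Equivalence (grameq n) :=
  ⟨fun _ _ _ _ _ _ => rfl, fun h p q hp hpq hq => (h p q hp hpq hq).symm,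
    fun h h' p q hp hpq hq => (h p q hp hpq hq).trans (h' p q hp hpq hq)⟩

theorem grameq.append {n : ℕ} {u v u' v' : List ℕ} (h : grameq n u v) (h' : grameq n u' v') :
    grameq n (u ++ u') (v ++ v') := by
  intro p q hp hpq hq
  rw [wis_append hpq, wis_append hpq]
  refine Finset.sup_congr rfl fun r hr => ?_
  obtain ⟨hpr, hrq⟩ := Finset.mem_Icc.1 hr
  rw [h p r hp hpr (hrq.trans hq), h' r q (hp.trans hpr) hrq hq]

theorem stmt3 (n : ℕ) :
    Equivalence (grameq n) ∧
      ∀ u v u' v' : List ℕ,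
        (∀ a ∈ u, 1 ≤ a ∧ a ≤ n) → (∀ a ∈ v, 1 ≤ a ∧ a ≤ n) →
        (∀ a ∈ u', 1 ≤ a ∧ a ≤ n) → (∀ a ∈ v', 1 ≤ a ∧ a ≤ n) →
        grameq n u v → grameq n u' v' → grameq n (u ++ u') (v ++ v') :=
  ⟨grameq_equivalence n, fun _ _ _ _ _ _ _ _ => grameq.append⟩
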